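/- Let n ≥ 3 and r be integers with 2 ≤ r ≤ n, K a real number, and let h₁, …, hₙ be real numbers with h₁ + ⋯ + hₙ = K. Then g_r(h₁,…,hₙ) ≤ ((3n−1)(n−2)/(2(3n+5)(n−1))) · K², where g_r(h₁,…,hₙ) = Σ_{1≤i<j≤n} hᵢhⱼ − (1/(n−1)) · h₁ · Σ_{j=2}^{n} hⱼ − Σ_{1≤j≤n, j≠r} hⱼ² + (1/(n−1)) · h₁². -/

import Mathlib

open Finset

/-- The quadratic form `g_r(h₁,…,hₙ) = Σ_{1≤i<j≤n} hᵢhⱼ − (1/(n−1))·h₁·Σ_{j=2}^{n} hⱼ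
− Σ_{1≤j≤n, j≠r} hⱼ² + (1/(n−1))·h₁²` for `2 ≤ r ≤ n` (0-based: `h₁ = h 0`, the
1-based index `r` corresponds to the 0-based index `r − 1`). -/
noncomputable def gR (n r : ℕ) (hn : 3 ≤ n) (h : Fin n → ℝ) : ℝ :=
  (∑ i : Fin n, ∑ j : Fin n, if i < j then h i * h j else 0)
    - (1 / ((n : ℝ) - 1)) * h ⟨0, by omega⟩ * (∑ j : Fin n, if 1 ≤ (j : ℕ) then h j else 0)
    - (∑ j : Fin n, if (j : ℕ) ≠ r - 1 then h j ^ 2 else 0)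
    + (1 / ((n : ℝ) - 1)) * h ⟨0, by omega⟩ ^ 2

theorem stmt_13 (n r : ℕ) (hn : 3 ≤ n) (hr : 2 ≤ r) (hrn : r ≤ n)
    (K : ℝ) (h : Fin n → ℝ) (hsum : ∑ i, h i = K) :
    gR n r hn h ≤ (3 * (n : ℝ) - 1) * ((n : ℝ) - 2) / (2 * (3 * (n : ℝ) + 5) * ((n : ℝ) - 1)) * K ^ 2 := by
  have h0n : 0 < n := by omega
  have hrn' : r - 1 < n := by omega
  set i0 : Fin n := ⟨0, h0n⟩ with hi0
  set ir : Fin n := ⟨r - 1, hrn'⟩ with hir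
  have hne : i0 ≠ ir := by
    simp only [hi0, hir, Ne, Fin.mk.injEq]
    omega
  set N : ℝ := (n : ℝ) with hN
  have hN3 : (3 : ℝ) ≤ N := by rw [hN]; exact_mod_cast hn
  set a : ℝ := h i0 with ha
  set b : ℝ := h ir with hb
  set Q : ℝ := ∑ i, h i ^ 2 with hQ
  -- pairwise sum
  have hpair : (∑ i : Fin n, ∑ j : Fin n, if i < j then h i * h j else 0) = (K ^ 2 - Q) / 2 := by
    have key : ∀ i j : Fin n, h i * h j =
        (if i < j then h i * h j else 0) + (if j < i then h i * h j else 0)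
          + (if i = j then h i ^ 2 else 0) := by
      intro i j
      rcases lt_trichotomy i j with hij | hij | hij
      · simp [hij, hij.ne, not_lt_of_gt hij]
      · simp [hij, sq]
      · simp [hij, hij.ne', not_lt_of_gt hij]
    have hswap : (∑ i : Fin n, ∑ j : Fin n, if j < i then h i * h j else 0)
        = ∑ i : Fin n, ∑ j : Fin n, if i < j then h i * h j else 0 := by
      rw [Finset.sum_comm]
      exact Finset.sum_congr rfl fun i _ => Finset.sum_congr rfl fun j _ => by
        rw [mul_comm]
    have hdiag : (∑ i : Fin n, ∑ j : Fin n, if i = j then h i ^ 2 else 0) = Q := by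
      rw [hQ]
      exact Finset.sum_congr rfl fun i _ => by simp
    have hK2 : K ^ 2 = (∑ i, h i) * (∑ j, h j) := by rw [hsum]; ring
    rw [Finset.sum_mul_sum] at hK2
    rw [show (∑ i : Fin n, ∑ j : Fin n, h i * h j)
        = ∑ i : Fin n, ∑ j : Fin n, ((if i < j then h i * h j else 0)
          + (if j < i then h i * h j else 0) + (if i = j then h i ^ 2 else 0)) from
      Finset.sum_congr rfl fun i _ => Finset.sum_congr rfl fun j _ => key i j] at hK2
    simp only [Finset.sum_add_distrib] at hK2
    rw [hswap, hdiag] at hK2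
    linarith
  -- sum over j ≥ 1
  have h1 : (∑ j : Fin n, if 1 ≤ (j : ℕ) then h j else 0) = K - a := by
    have : ∀ j : Fin n, (if 1 ≤ (j : ℕ) then h j else 0)
        = h j - (if j = i0 then h j else 0) := by
      intro j
      by_cases hj : j = i0
      · have : (j : ℕ) = 0 := by rw [hj]
        simp [hj, hi0, this]
      · have : 1 ≤ (j : ℕ) := by
          rcases Nat.eq_zero_or_pos (j : ℕ) with h0 | h0
          · exact absurd (Fin.ext h0) hj
          · exact h0
        simp [hj, this]
    simp_rw [this]
    rw [Finset.sum_sub_distrib, hsum, Finset.sum_ite_eq' Finset.univ i0 h]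
    simp [ha]
  -- sum over j ≠ r-1
  have h2 : (∑ j : Fin n, if (j : ℕ) ≠ r - 1 then h j ^ 2 else 0) = Q - b ^ 2 := by
    have : ∀ j : Fin n, (if (j : ℕ) ≠ r - 1 then h j ^ 2 else 0)
        = h j ^ 2 - (if j = ir then h j ^ 2 else 0) := by
      intro j
      by_cases hj : j = ir
      · have : (j : ℕ) = r - 1 := by rw [hj]
        simp [hj, hir, this]
      · have : (j : ℕ) ≠ r - 1 := fun hc => hj (Fin.ext hc)
        simp [hj, this]
    simp_rw [this]
    rw [Finset.sum_sub_distrib, Finset.sum_ite_eq' Finset.univ ir (fun j => h j ^ 2)]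
    simp [hQ, hb]
  -- Cauchy–Schwarz on the remaining n-2 coordinates
  have hcs : (K - a - b) ^ 2 ≤ (N - 2) * (Q - a ^ 2 - b ^ 2) := by
    set s : Finset (Fin n) := (Finset.univ.erase ir).erase i0 with hs
    have hi0mem : i0 ∈ Finset.univ.erase ir := Finset.mem_erase.2 ⟨hne, Finset.mem_univ _⟩
    have hsum_s : ∑ j ∈ s, h j = K - b - a := by
      rw [hs, Finset.sum_erase_eq_sub hi0mem,
        Finset.sum_erase_eq_sub (Finset.mem_univ ir), hsum]
    have hsq_s : ∑ j ∈ s, h j ^ 2 = Q - b ^ 2 - a ^ 2 := by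
      rw [hs, Finset.sum_erase_eq_sub hi0mem,
        Finset.sum_erase_eq_sub (Finset.mem_univ ir), hQ]
    have hcard : (s.card : ℝ) = N - 2 := by
      rw [hs, Finset.card_erase_of_mem hi0mem, Finset.card_erase_of_mem (Finset.mem_univ ir)]
      simp only [Finset.card_univ, Fintype.card_fin]
      have : ((n - 1 - 1 : ℕ) : ℝ) = (n : ℝ) - 2 := by
        have : (2 : ℕ) ≤ n := by omega
        push_cast [Nat.sub_sub]
        rw [Nat.cast_sub this]
        norm_num
      exact this
    have := sq_sum_le_card_mul_sum_sq (s := s) (f := h)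
    rw [hsum_s, hsq_s] at this
    calc (K - a - b) ^ 2 = (K - b - a) ^ 2 := by ring
      _ ≤ (s.card : ℝ) * (Q - b ^ 2 - a ^ 2) := by exact_mod_cast this
      _ = (N - 2) * (Q - a ^ 2 - b ^ 2) := by rw [hcard]; ring
  -- rewrite gR
  have hgR : gR n r hn h = (K ^ 2 - Q) / 2 - (1 / (N - 1)) * a * (K - a) - (Q - b ^ 2)
      + (1 / (N - 1)) * a ^ 2 := by
    unfold gR
    rw [hpair, h1, h2]
  rw [hgR]
  -- final algebraic inequality
  have hN1 : (0 : ℝ) < N - 1 := by linarith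
  have hN2 : (0 : ℝ) < N - 2 := by linarith
  have hNp1 : (0 : ℝ) < N + 1 := by linarith
  have hD : (0 : ℝ) < 3 * N + 5 := by linarith
  have hslack : 0 ≤ (N - 2) * (Q - a ^ 2 - b ^ 2) - (K - a - b) ^ 2 := by linarith
  have key : (3 * N - 1) * (N - 2) / (2 * (3 * N + 5) * (N - 1)) * K ^ 2
      - ((K ^ 2 - Q) / 2 - (1 / (N - 1)) * a * (K - a) - (Q - b ^ 2) + (1 / (N - 1)) * a ^ 2)
      = ((3 * N + 5) * (N - 1) * ((N + 1) * b + 3 * (a - K)) ^ 2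
          + (N - 2) ^ 2 * ((3 * N + 5) * a - 2 * K) ^ 2
          + 3 * (N + 1) * (N - 1) * (3 * N + 5)
            * ((N - 2) * (Q - a ^ 2 - b ^ 2) - (K - a - b) ^ 2))
        / (2 * (N + 1) * (N - 1) * (N - 2) * (3 * N + 5)) := by
    field_simp
    ring
  have hnum : 0 ≤ (3 * N + 5) * (N - 1) * ((N + 1) * b + 3 * (a - K)) ^ 2
      + (N - 2) ^ 2 * ((3 * N + 5) * a - 2 * K) ^ 2
      + 3 * (N + 1) * (N - 1) * (3 * N + 5)
        * ((N - 2) * (Q - a ^ 2 - b ^ 2) - (K - a - b) ^ 2) := by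
    have t1 : 0 ≤ (3 * N + 5) * (N - 1) * ((N + 1) * b + 3 * (a - K)) ^ 2 := by positivity
    have t2 : 0 ≤ (N - 2) ^ 2 * ((3 * N + 5) * a - 2 * K) ^ 2 := by positivity
    have t3 : 0 ≤ 3 * (N + 1) * (N - 1) * (3 * N + 5)
        * ((N - 2) * (Q - a ^ 2 - b ^ 2) - (K - a - b) ^ 2) := by
      apply mul_nonneg _ hslack
      positivity
    linarith
  have hden : (0 : ℝ) < 2 * (N + 1) * (N - 1) * (N - 2) * (3 * N + 5) := by positivity
  nlinarith [div_nonneg hnum hden.le, key]
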